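/- arXiv:2602.23222 — 6 statements merged into one kernel-verified Lean document; each statement's English description precedes it below -/
import Mathlib

section
/- Let X and Y be locally compact Hausdorff spaces, f : X → Y an open continuous surjection, and A a continuous field of C*-algebras over X with continuous sections Γ₀(A). Then for every a ∈ Γ₀(A), the function y ↦ ‖a restricted to f⁻¹(y)‖ (the sup of ‖a_x‖ over x ∈ f⁻¹(y)) is continuous on Y. -/
/-- For a continuous field of C*-algebras `A` over a locally compact Hausdorff
space `X` (with fibers `A x` C*-algebras), a continuous vector field `a` vanishing at infinity
(encoded by its continuous, cocompactly-vanishing norm function), and an open continuous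
surjection `f : X → Y`, the function `y ↦ ‖a|_{f⁻¹(y)}‖ = sup_{x ∈ f⁻¹(y)} ‖a x‖`
is continuous on `Y`. -/
theorem stmt_0 {X Y : Type*} [TopologicalSpace X] [LocallyCompactSpace X] [T2Space X]
    [TopologicalSpace Y] [LocallyCompactSpace Y] [T2Space Y]
    (A : X → Type*) [∀ x, NonUnitalNormedRing (A x)] [∀ x, StarRing (A x)]
    [∀ x, CStarRing (A x)]
    (a : ∀ x, A x)
    (hcont : Continuous fun x => ‖a x‖)
    (hvan : Filter.Tendsto (fun x => ‖a x‖) (Filter.cocompact X) (nhds 0))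
    (f : X → Y) (hf : Continuous f) (hopen : IsOpenMap f) (hsurj : Function.Surjective f) :
    Continuous fun y => sSup ((fun x => ‖a x‖) '' (f ⁻¹' {y})) := by
  set g : X → ℝ := fun x => ‖a x‖ with hgdef
  have hg0 : ∀ x, 0 ≤ g x := fun x => norm_nonneg _
  -- superlevel sets are compact
  have hlevel : ∀ δ : ℝ, 0 < δ → IsCompact {x | δ ≤ g x} := by
    intro δ hδ
    have h1 : g ⁻¹' Set.Iio δ ∈ Filter.cocompact X := hvan (Iio_mem_nhds hδ)
    obtain ⟨K, hK, hKsub⟩ := Filter.mem_cocompact.mp h1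
    refine hK.of_isClosed_subset (isClosed_le continuous_const hcont) ?_
    intro x hx
    by_contra hxK
    exact absurd (hKsub hxK) (by simpa using hx)
  -- g is bounded
  obtain ⟨M, hM⟩ : ∃ M, ∀ x, g x ≤ M := by
    obtain ⟨C, hC⟩ := (hlevel 1 one_pos).exists_bound_of_continuousOn hcont.continuousOn
    refine ⟨max C 1, fun x => ?_⟩
    by_cases hx : 1 ≤ g x
    · have := hC x hx
      rw [Real.norm_eq_abs] at this
      exact ((le_abs_self _).trans this).trans (le_max_left _ _)
    · exact (le_of_not_ge hx).trans (le_max_right _ _)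
  have hne : ∀ y : Y, (g '' (f ⁻¹' {y})).Nonempty := fun y => by
    obtain ⟨x, hx⟩ := hsurj y
    exact ⟨g x, x, hx, rfl⟩
  have hbdd : ∀ y : Y, BddAbove (g '' (f ⁻¹' {y})) :=
    fun y => ⟨M, by rintro _ ⟨x, -, rfl⟩; exact hM x⟩
  set F : Y → ℝ := fun y => sSup (g '' (f ⁻¹' {y})) with hFdef
  have hFle : ∀ y, ∀ x, f x = y → g x ≤ F y := fun y x hx =>
    le_csSup (hbdd y) ⟨x, hx, rfl⟩
  have hF0 : ∀ y, 0 ≤ F y := fun y => by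
    obtain ⟨x, hx⟩ := hsurj y
    exact (hg0 x).trans (hFle y x hx)
  rw [continuous_iff_continuousAt]
  intro y₀
  rw [ContinuousAt, Metric.tendsto_nhds]
  intro ε hε
  set s := F y₀ with hsdef
  -- upper bound: compact superlevel set avoiding the fiber of y₀
  have hK : IsCompact {x | s + ε/2 ≤ g x} := hlevel _ (by have := hF0 y₀; linarith)
  have hclosed : IsClosed (f '' {x | s + ε/2 ≤ g x}) := (hK.image hf).isClosed
  have hy₀K : y₀ ∉ f '' {x | s + ε/2 ≤ g x} := by
    rintro ⟨x, hx, hfx⟩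
    have h2 : g x ≤ s := hFle y₀ x hfx
    have h3 : s + ε/2 ≤ g x := hx
    linarith
  -- lower bound: a point of the fiber where g is nearly s
  obtain ⟨b, ⟨x₀, hx₀f, rfl⟩, hx₀⟩ :=
    exists_lt_of_lt_csSup (hne y₀) (show s - ε/2 < s by linarith)
  have hUopen : IsOpen {x | s - ε/2 < g x} := isOpen_lt continuous_const hcont
  have hVopen : IsOpen ((f '' {x | s + ε/2 ≤ g x})ᶜ ∩ f '' {x | s - ε/2 < g x}) :=
    hclosed.isOpen_compl.inter (hopen _ hUopen)
  have hy₀V : y₀ ∈ (f '' {x | s + ε/2 ≤ g x})ᶜ ∩ f '' {x | s - ε/2 < g x} :=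
    ⟨hy₀K, ⟨x₀, hx₀, hx₀f⟩⟩
  filter_upwards [hVopen.mem_nhds hy₀V] with y hy
  obtain ⟨hy1, x, hxU, hfx⟩ := hy
  rw [Real.dist_eq, abs_sub_lt_iff]
  constructor
  · have hup : F y ≤ s + ε/2 := by
      refine csSup_le (hne y) ?_
      rintro _ ⟨z, hz, rfl⟩
      by_contra hzg
      exact hy1 ⟨z, le_of_not_ge (by simpa using hzg), hz⟩
    linarith
  · have hlow : s - ε/2 < F y := lt_of_lt_of_le hxU (hFle y x hfx)
    linarith
end

section
/- Let a : X → ℝ be a continuous function on a locally compact Hausdorff space X vanishing at infinity with a ≥ 0, let f : X → Y be an open continuous surjection onto a locally compact Hausdorff space Y. Then the function y ↦ sup_{x ∈ f⁻¹(y)} a(x) is continuous on Y. -/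
/-- if `a : X → ℝ` is continuous, nonnegative and vanishes at infinity
(`{x | ε ≤ a x}` compact for every `ε > 0`), and `f : X → Y` is an open continuous
surjection of locally compact Hausdorff spaces, then `y ↦ sup_{x ∈ f⁻¹(y)} a x` is
continuous. -/
theorem stmt_1 {X Y : Type*} [TopologicalSpace X] [LocallyCompactSpace X] [T2Space X]
    [TopologicalSpace Y] [LocallyCompactSpace Y] [T2Space Y]
    (a : X → ℝ) (ha : Continuous a) (ha0 : ∀ x, 0 ≤ a x)
    (hvan : ∀ ε : ℝ, 0 < ε → IsCompact {x | ε ≤ a x})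
    (f : X → Y) (hf : Continuous f) (hopen : IsOpenMap f) (hsurj : Function.Surjective f) :
    Continuous fun y => sSup (a '' (f ⁻¹' {y})) := by
  obtain ⟨M, hM⟩ : ∃ M, ∀ x, a x ≤ M := by
    obtain ⟨M, hM⟩ := ((hvan 1 one_pos).image ha).bddAbove
    refine ⟨max M 1, fun x => ?_⟩
    by_cases h : 1 ≤ a x
    · exact le_max_of_le_left (hM ⟨x, h, rfl⟩)
    · exact le_max_of_le_right (le_of_not_ge h)
  have hbdd : ∀ y, BddAbove (a '' (f ⁻¹' {y})) := fun y =>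
    ⟨M, by rintro _ ⟨x, -, rfl⟩; exact hM x⟩
  have hne : ∀ y, (a '' (f ⁻¹' {y})).Nonempty := fun y => by
    obtain ⟨x, hx⟩ := hsurj y; exact ⟨a x, x, hx, rfl⟩
  set g := fun y => sSup (a '' (f ⁻¹' {y})) with hg
  have hle : ∀ {x y}, f x = y → a x ≤ g y := fun {x y} h =>
    le_csSup (hbdd y) ⟨x, h, rfl⟩
  have hg0 : ∀ y, 0 ≤ g y := fun y => by
    obtain ⟨x, hx⟩ := hsurj y; exact le_trans (ha0 x) (hle hx)
  rw [continuous_iff_continuousAt]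
  intro y₀
  rw [ContinuousAt, Metric.tendsto_nhds]
  intro ε hε
  obtain ⟨_, ⟨x₀, hx₀, rfl⟩, hx₀lt⟩ :=
    exists_lt_of_lt_csSup (hne y₀) (show g y₀ - ε / 2 < g y₀ by linarith)
  have hWopen : IsOpen {x | g y₀ - ε / 2 < a x} := isOpen_lt continuous_const ha
  have hU1 : f '' {x | g y₀ - ε / 2 < a x} ∈ nhds y₀ :=
    (hopen _ hWopen).mem_nhds ⟨x₀, hx₀lt, hx₀⟩
  have hKcpt : IsCompact {x | g y₀ + ε / 2 ≤ a x} := hvan _ (by linarith [hg0 y₀])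
  have hclosed : IsClosed (f '' {x | g y₀ + ε / 2 ≤ a x}) := (hKcpt.image hf).isClosed
  have hy₀ : y₀ ∉ f '' {x | g y₀ + ε / 2 ≤ a x} := by
    rintro ⟨x, hx, hfx⟩
    have h2 := hle hfx
    have h1 : g y₀ + ε / 2 ≤ a x := hx
    linarith
  have hU2 : (f '' {x | g y₀ + ε / 2 ≤ a x})ᶜ ∈ nhds y₀ :=
    hclosed.isOpen_compl.mem_nhds hy₀
  filter_upwards [hU1, hU2] with y hy1 hy2
  obtain ⟨x, hx, hfx⟩ := hy1
  have h1 : g y₀ - ε / 2 < g y := lt_of_lt_of_le hx (hle hfx)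
  have h2 : g y ≤ g y₀ + ε / 2 := by
    apply csSup_le (hne y)
    rintro _ ⟨x', hx', rfl⟩
    by_contra h
    push_neg at h
    exact hy2 ⟨x', h.le, hx'⟩
  rw [Real.dist_eq, abs_sub_lt_iff]
  constructor <;> linarith
end

section
/- Let q > 0, q ≠ 1, ε ∈ {−1,1}, λ ∈ ℂ*. Consider the vector space V with basis (ζ_n)_{n ∈ ℤ, n ≡ (ε−1)/2 mod 2} and the operators θζ_n = [n]_q ζ_n, A^± ζ_n = (λ q^{1±n} − λ⁻¹ q^{−1∓n}) ζ_{n±2}. If λ is not of the form ±qᵐ for any integer m of parity opposite to ε, then V has no proper nonzero subspace invariant under θ, A⁺, and A⁻ and spanned by a subset of the basis; equivalently, for every n in the index set, the coefficients λ q^{1±n} − λ⁻¹ q^{−1∓n} are nonzero. -/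
lemma key_aux (q : ℝ) (hq : 0 < q) (lam : ℂ) (hlam : lam ≠ 0) (k : ℤ)
    (h0 : lam * (q : ℂ) ^ k - lam⁻¹ * (q : ℂ) ^ (-k) = 0) :
    lam = (q : ℂ) ^ (-k) ∨ lam = -((q : ℂ) ^ (-k)) := by
  have hqc : (q : ℂ) ≠ 0 := by exact_mod_cast hq.ne'
  have hzk : (q : ℂ) ^ k ≠ 0 := zpow_ne_zero _ hqc
  have hsq : lam ^ 2 = ((q : ℂ) ^ (-k)) ^ 2 := by
    have h1 : lam * (q : ℂ) ^ k = lam⁻¹ * (q : ℂ) ^ (-k) := sub_eq_zero.mp h0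
    have h2 : lam * (lam * (q : ℂ) ^ k) = lam * (lam⁻¹ * (q : ℂ) ^ (-k)) := by rw [h1]
    rw [← mul_assoc, ← mul_assoc, mul_inv_cancel₀ hlam, one_mul] at h2
    have h4 : lam ^ 2 * ((q : ℂ) ^ k * (q : ℂ) ^ (-k)) = (q : ℂ) ^ (-k) * (q : ℂ) ^ (-k) := by
      linear_combination ((q : ℂ) ^ (-k)) * h2
    rw [← zpow_add₀ hqc, add_neg_cancel, zpow_zero, mul_one, ← sq] at h4
    exact h4
  have := sq_eq_sq_iff_eq_or_eq_neg.mp hsq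
  simpa using this
/-- for `q > 0`, `q ≠ 1`, `ε ∈ {±1}` and `λ ∈ ℂ*` which is not of the form
`± qᵐ` for `m` of parity opposite to `ε`, the raising and lowering coefficients
`λ q^{1±n} − λ⁻¹ q^{−1∓n}` of the principal series `ind_q(ε,λ)` never vanish (for `n` in the
index set `ℤ^ε`); hence the module is simple. -/
theorem stmt_4 (q : ℝ) (hq : 0 < q) (hq1 : q ≠ 1) (ε : ℤ) (hε : ε = 1 ∨ ε = -1)
    (lam : ℂ) (hlam : lam ≠ 0)
    (h : ∀ m : ℤ, (Even m ↔ ε = -1) → lam ≠ (q : ℂ) ^ m ∧ lam ≠ -((q : ℂ) ^ m)) :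
    ∀ n : ℤ, (Even n ↔ ε = 1) →
      lam * (q : ℂ) ^ (1 + n) - lam⁻¹ * (q : ℂ) ^ (-(1 + n)) ≠ 0 ∧
      lam * (q : ℂ) ^ (1 - n) - lam⁻¹ * (q : ℂ) ^ (-(1 - n)) ≠ 0 := by
  intro n hn
  rw [Int.even_iff] at hn
  constructor
  · intro h0
    rcases key_aux q hq lam hlam (1 + n) h0 with h1 | h1 <;>
    · have hm := h (-(1 + n)) (by rw [Int.even_iff]; omega)
      exact absurd h1 (by tauto)
  · intro h0
    rcases key_aux q hq lam hlam (1 - n) h0 with h1 | h1 <;>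
    · have hm := h (-(1 - n)) (by rw [Int.even_iff]; omega)
      exact absurd h1 (by tauto)
end

section
/- Let q > 0, q ≠ 1, and let n be a nonnegative integer, ε = (−1)^{n+1}, σ ∈ {−1,1}, λ = σqⁿ. On the module with basis (ζ_m)_{m ∈ ℤ^ε} and raising/lowering operators A^± ζ_m = (λ q^{1±m} − λ⁻¹ q^{−1∓m}) ζ_{m±2}, the subspaces D⁺ = span(ζ_m : m ∈ ℤ^ε, m > n) and D⁻ = span(ζ_m : m ∈ ℤ^ε, m < −n) are both invariant under A⁺ and A⁻. -/
/-- The subspace `D⁺` spanned by the `ζ_m` with `m ∈ ℤ^ε`, `m > n` (here `ε = (−1)^{n+1}`,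
so `m ∈ ℤ^ε ↔ Odd (m − n)`). -/
noncomputable def Dplus (n : ℕ) : Submodule ℂ (ℤ →₀ ℂ) :=
  Submodule.span ℂ
    {w : ℤ →₀ ℂ | ∃ m : ℤ, Odd (m - (n : ℤ)) ∧ (n : ℤ) < m ∧ w = Finsupp.single m 1}

/-- The subspace `D⁻` spanned by the `ζ_m` with `m ∈ ℤ^ε`, `m < −n`. -/
noncomputable def Dminus (n : ℕ) : Submodule ℂ (ℤ →₀ ℂ) :=
  Submodule.span ℂ
    {w : ℤ →₀ ℂ | ∃ m : ℤ, Odd (m - (n : ℤ)) ∧ m < -(n : ℤ) ∧ w = Finsupp.single m 1}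

/-- for `q > 0`, `q ≠ 1`, `n ≥ 0`, `σ = ±1` and `λ = σ qⁿ`, the subspaces
`D⁺ = span(ζ_m : m ∈ ℤ^ε, m > n)` and `D⁻ = span(ζ_m : m ∈ ℤ^ε, m < −n)` are invariant under
the raising and lowering operators `A^± ζ_m = (λ q^{1±m} − λ⁻¹ q^{−1∓m}) ζ_{m±2}`. -/
theorem stmt_5 (q : ℝ) (hq : 0 < q) (hq1 : q ≠ 1) (n : ℕ) (σ : ℤ) (hσ : σ = 1 ∨ σ = -1)
    (lam : ℂ) (hlam : lam = (σ : ℂ) * (q : ℂ) ^ (n : ℤ))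
    (Ap Am : (ℤ →₀ ℂ) →ₗ[ℂ] (ℤ →₀ ℂ))
    (hAp : ∀ m : ℤ, Ap (Finsupp.single m 1) =
      (lam * (q : ℂ) ^ (1 + m) - lam⁻¹ * (q : ℂ) ^ (-(1 + m))) • Finsupp.single (m + 2) 1)
    (hAm : ∀ m : ℤ, Am (Finsupp.single m 1) =
      (lam * (q : ℂ) ^ (1 - m) - lam⁻¹ * (q : ℂ) ^ (-(1 - m))) • Finsupp.single (m - 2) 1) :
    (∀ v ∈ Dplus n, Ap v ∈ Dplus n ∧ Am v ∈ Dplus n) ∧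
    (∀ v ∈ Dminus n, Ap v ∈ Dminus n ∧ Am v ∈ Dminus n) := by
  have hq0 : (q : ℂ) ≠ 0 := by exact_mod_cast hq.ne'
  have hσC : (σ : ℂ) = 1 ∨ (σ : ℂ) = -1 := by
    rcases hσ with h | h <;> [left; right] <;> simp [h]
  have hσ2 : (σ : ℂ) * (σ : ℂ) = 1 := by rcases hσC with h | h <;> simp [h]
  have hσ0 : (σ : ℂ) ≠ 0 := by rcases hσC with h | h <;> simp [h]
  have hlaminv : lam⁻¹ = (σ : ℂ) * (q : ℂ) ^ (-(n : ℤ)) := by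
    have h1 : ((σ : ℂ) * (q : ℂ) ^ (-(n : ℤ))) * lam = 1 := by
      rw [hlam, mul_mul_mul_comm, hσ2, one_mul, ← zpow_add₀ hq0]
      simp
    exact inv_eq_of_mul_eq_one_left h1
  -- vanishing of the boundary coefficients
  have keyp : ∀ m : ℤ, m = -(n : ℤ) - 1 →
      lam * (q : ℂ) ^ (1 + m) - lam⁻¹ * (q : ℂ) ^ (-(1 + m)) = 0 := by
    intro m hm
    subst hm
    have ha : (n : ℤ) + (1 + (-(n : ℤ) - 1)) = 0 := by ring
    have hb : -(n : ℤ) + -(1 + (-(n : ℤ) - 1)) = 0 := by ring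
    rw [hlaminv, hlam, mul_assoc, mul_assoc, ← zpow_add₀ hq0, ← zpow_add₀ hq0, ha, hb,
      sub_self]
  have keym : ∀ m : ℤ, m = (n : ℤ) + 1 →
      lam * (q : ℂ) ^ (1 - m) - lam⁻¹ * (q : ℂ) ^ (-(1 - m)) = 0 := by
    intro m hm
    subst hm
    have ha : (n : ℤ) + (1 - ((n : ℤ) + 1)) = 0 := by ring
    have hb : -(n : ℤ) + -(1 - ((n : ℤ) + 1)) = 0 := by ring
    rw [hlaminv, hlam, mul_assoc, mul_assoc, ← zpow_add₀ hq0, ← zpow_add₀ hq0, ha, hb,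
      sub_self]
  have memP : ∀ m : ℤ, Odd (m - (n : ℤ)) → (n : ℤ) < m →
      Finsupp.single m (1 : ℂ) ∈ Dplus n := fun m h1 h2 =>
    Submodule.subset_span ⟨m, h1, h2, rfl⟩
  have memM : ∀ m : ℤ, Odd (m - (n : ℤ)) → m < -(n : ℤ) →
      Finsupp.single m (1 : ℂ) ∈ Dminus n := fun m h1 h2 =>
    Submodule.subset_span ⟨m, h1, h2, rfl⟩
  have genp : ∀ (A : (ℤ →₀ ℂ) →ₗ[ℂ] (ℤ →₀ ℂ)),
      (∀ m : ℤ, Odd (m - (n : ℤ)) → (n : ℤ) < m → A (Finsupp.single m 1) ∈ Dplus n) →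
      ∀ v ∈ Dplus n, A v ∈ Dplus n := by
    intro A hA v hv
    refine Submodule.span_induction ?_ (by simp) ?_ ?_ hv
    · rintro w ⟨m, h1, h2, rfl⟩; exact hA m h1 h2
    · intro x y _ _ hx hy; rw [map_add]; exact add_mem hx hy
    · intro c x _ hx; rw [map_smul]; exact Submodule.smul_mem _ _ hx
  have genm : ∀ (A : (ℤ →₀ ℂ) →ₗ[ℂ] (ℤ →₀ ℂ)),
      (∀ m : ℤ, Odd (m - (n : ℤ)) → m < -(n : ℤ) → A (Finsupp.single m 1) ∈ Dminus n) →
      ∀ v ∈ Dminus n, A v ∈ Dminus n := by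
    intro A hA v hv
    refine Submodule.span_induction ?_ (by simp) ?_ ?_ hv
    · rintro w ⟨m, h1, h2, rfl⟩; exact hA m h1 h2
    · intro x y _ _ hx hy; rw [map_add]; exact add_mem hx hy
    · intro c x _ hx; rw [map_smul]; exact Submodule.smul_mem _ _ hx
  constructor
  · intro v hv
    constructor
    · refine genp Ap ?_ v hv
      intro m h1 h2
      rw [hAp]
      exact Submodule.smul_mem _ _ (memP (m + 2) (by
        rcases h1 with ⟨k, hk⟩; exact ⟨k + 1, by omega⟩) (by omega))
    · refine genp Am ?_ v hv
      intro m h1 h2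
      rcases eq_or_ne m ((n : ℤ) + 1) with hm | hm
      · rw [hAm, keym m hm, zero_smul]; exact Submodule.zero_mem _
      · have h3 : (n : ℤ) < m - 2 := by rcases h1 with ⟨k, hk⟩; omega
        rw [hAm]
        exact Submodule.smul_mem _ _ (memP (m - 2) (by
          rcases h1 with ⟨k, hk⟩; exact ⟨k - 1, by omega⟩) h3)
  · intro v hv
    constructor
    · refine genm Ap ?_ v hv
      intro m h1 h2
      rcases eq_or_ne m (-(n : ℤ) - 1) with hm | hm
      · rw [hAp, keyp m hm, zero_smul]; exact Submodule.zero_mem _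
      · have h3 : m + 2 < -(n : ℤ) := by rcases h1 with ⟨k, hk⟩; omega
        rw [hAp]
        exact Submodule.smul_mem _ _ (memM (m + 2) (by
          rcases h1 with ⟨k, hk⟩; exact ⟨k + 1, by omega⟩) h3)
    · refine genm Am ?_ v hv
      intro m h1 h2
      rw [hAm]
      exact Submodule.smul_mem _ _ (memM (m - 2) (by
        rcases h1 with ⟨k, hk⟩; exact ⟨k - 1, by omega⟩) (by omega))
end

section
/- With notation as above, for each λ in the closed upper half of the unit circle 𝕌₊ = {z ∈ ℂ : |z| = 1, Im z ≥ 0}, let p*_λ ∈ K\U be the point with X(p*_λ) = λ and Z(p*_λ) = 0. Then every K-orbit in K\U contains exactly one point of the form p*_λ with λ ∈ 𝕌₊, and the stabilizer of p*_λ in K = SO(2) equals K if λ ∈ {−1, 1} and equals {±1} otherwise. -/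
open Matrix

noncomputable section

def θm : Matrix (Fin 2) (Fin 2) ℂ := !![0, Complex.I; -Complex.I, 0]

def Rot (t : ℝ) : Matrix (Fin 2) (Fin 2) ℂ :=
  !![(Real.cos t : ℂ), -(Real.sin t : ℂ); (Real.sin t : ℂ), (Real.cos t : ℂ)]

def Mf (u : Matrix (Fin 2) (Fin 2) ℂ) : Matrix (Fin 2) (Fin 2) ℂ := star u * θm * u

def Xf (u : Matrix (Fin 2) (Fin 2) ℂ) : ℂ := Complex.I * Mf u 1 0

def Zf (u : Matrix (Fin 2) (Fin 2) ℂ) : ℂ := Mf u 0 0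

def SU2 (u : Matrix (Fin 2) (Fin 2) ℂ) : Prop := star u * u = 1 ∧ u.det = 1

/-- A representative in `SU(2)` of the point `p*_λ ∈ K\U`, i.e. with `X = λ` and `Z = 0`. -/
def IsPt (lam : ℂ) (w : Matrix (Fin 2) (Fin 2) ℂ) : Prop := SU2 w ∧ Xf w = lam ∧ Zf w = 0

/-! For `u ∈ SU(2)` the matrix `M = u⋆θu` is Hermitian, traceless and squares to `1`, so it is
`!![Z, i X̄; -i X, -Z]` with `Z` real and `|X|² + Z² = 1`; it determines `u` up to left
multiplication by `K`, because `K` is the centralizer of `θ` in `SU(2)`. Right multiplication by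
`Rot t` fixes `Re X` and rotates `(Im X, Z)` through the angle `2t`. So each orbit contains a point
with `Z = 0` and `Im X ≥ 0`, which is `p*_λ` with `λ = Re X + i √(1 - (Re X)²)`, and `Re X`
separates the orbits. The rotation through `2t` fixes `(Im λ, 0)` for every `t` when `Im λ = 0`,
and otherwise only when `t ∈ πℤ`, that is, when `Rot t = ±1`. -/

open Complex ComplexConjugate

local notation "M₂" => Matrix (Fin 2) (Fin 2) ℂ

lemma Real.exists_cos_sin_eq {p q : ℝ} (h : p ^ 2 + q ^ 2 = 1) :
    ∃ s, Real.cos s = p ∧ Real.sin s = q := by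
  have hz : ‖(⟨p, q⟩ : ℂ)‖ = 1 := by
    rw [norm_def, normSq_mk, ← pow_two, ← pow_two, h, Real.sqrt_one]
  have hz0 : (⟨p, q⟩ : ℂ) ≠ 0 := fun h0 => by simp [h0] at hz
  exact ⟨arg ⟨p, q⟩, by simp [cos_arg hz0, hz], by simp [sin_arg, hz]⟩

lemma Complex.eq_of_re_eq_of_norm_eq {z w : ℂ} (hn : ‖z‖ = ‖w‖) (hre : z.re = w.re)
    (hz : 0 ≤ z.im) (hw : 0 ≤ w.im) : z = w := by
  have hsq : z.im ^ 2 = w.im ^ 2 := by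
    have := congrArg (· ^ 2) hn
    simp only [Complex.sq_norm, normSq_apply, hre] at this
    linear_combination this
  exact Complex.ext hre ((sq_eq_sq₀ hz hw).mp hsq)

lemma Complex.im_ne_zero_of_norm_eq_one {z : ℂ} (h : ‖z‖ = 1) (hz : ¬(z = 1 ∨ z = -1)) :
    z.im ≠ 0 := by
  intro him
  have hre : z = z.re := Complex.ext rfl (by simp [him])
  rw [hre, norm_real, Real.norm_eq_abs] at h
  apply hz
  rcases abs_eq zero_le_one |>.mp h with h1 | h1 <;> rw [hre, h1] <;> simp

lemma Complex.exp_neg_arg_mul_I_mul_self (z : ℂ) : cexp (-arg z * I) * z = ‖z‖ := by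
  calc cexp (-arg z * I) * z = cexp (-arg z * I) * (‖z‖ * cexp (arg z * I)) := by
        rw [norm_mul_exp_arg_mul_I]
    _ = ‖z‖ := by
        rw [mul_left_comm, ← Complex.exp_add, neg_mul, neg_add_cancel, exp_zero, mul_one]

lemma star_θm : star θm = θm := by
  ext i j; fin_cases i <;> fin_cases j <;> simp [θm, Matrix.star_apply]

lemma θm_mul_θm : θm * θm = 1 := by
  ext i j; fin_cases i <;> fin_cases j <;> simp [θm]

lemma star_Rot (t : ℝ) : star (Rot t) = Rot (-t) := by
  ext i j; fin_cases i <;> fin_cases j <;>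
    simp [Rot, Matrix.star_apply, -Complex.ofReal_cos, -Complex.ofReal_sin]

lemma Rot_mul_Rot (s t : ℝ) : Rot s * Rot t = Rot (s + t) := by
  ext i j; fin_cases i <;> fin_cases j <;> simp [Rot, Real.cos_add, Real.sin_add] <;> ring

lemma Rot_zero : Rot 0 = 1 := by
  ext i j; fin_cases i <;> fin_cases j <;> simp [Rot]

lemma Rot_pi : Rot Real.pi = -1 := by
  ext i j; fin_cases i <;> fin_cases j <;> simp [Rot]

lemma commute_θm_Rot (t : ℝ) : Commute θm (Rot t) := by
  ext i j; fin_cases i <;> fin_cases j <;> simp [θm, Rot] <;> ring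

lemma Rot_eq_one_or_neg_one_of_cexp_eq_one {t : ℝ} (h : cexp (2 * t * I) = 1) :
    Rot t = 1 ∨ Rot t = -1 := by
  have hsq : cexp (t * I) * cexp (t * I) = 1 := by rw [← Complex.exp_add, ← h]; congr 1; ring
  have hc := exp_ofReal_mul_I_re t
  have hs := exp_ofReal_mul_I_im t
  rcases mul_self_eq_one_iff.mp hsq with h1 | h1 <;> rw [h1] at hc hs <;> [left; right] <;>
    ext i j <;> fin_cases i <;> fin_cases j <;> simp [Rot, ← hc, ← hs, -ofReal_cos, -ofReal_sin]

namespace SU2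

variable {k u v : M₂}

lemma mul_star (hu : SU2 u) : u * star u = 1 := mul_eq_one_comm.mp hu.1

lemma mul (hu : SU2 u) (hv : SU2 v) : SU2 (u * v) := by
  refine ⟨?_, by rw [Matrix.det_mul, hu.2, hv.2, one_mul]⟩
  rw [StarMul.star_mul, Matrix.mul_assoc, ← Matrix.mul_assoc (star u), hu.1, Matrix.one_mul, hv.1]

protected lemma star (hu : SU2 u) : SU2 (star u) := by
  refine ⟨by rw [star_star, hu.mul_star], ?_⟩
  rw [Matrix.star_eq_conjTranspose, Matrix.det_conjTranspose, hu.2, star_one]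

lemma star_eq_adjugate (hu : SU2 u) : star u = u.adjugate := by
  calc star u = u.adjugate * u * star u := by
        rw [Matrix.adjugate_mul, hu.2, one_smul, Matrix.one_mul]
    _ = u.adjugate := by rw [Matrix.mul_assoc, hu.mul_star, Matrix.mul_one]

lemma exists_eq_Rot_of_commute (hk : SU2 k) (hc : Commute k θm) : ∃ s, k = Rot s := by
  have hθ (i j : Fin 2) := congrFun (congrFun hc.eq i) j
  have hadj (i j : Fin 2) := congrFun (congrFun hk.star_eq_adjugate i) j
  have h10 : k 1 0 = -k 0 1 := by
    have := hθ 0 0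
    simp only [θm, Matrix.mul_apply, Fin.sum_univ_two, of_apply, cons_val', cons_val_zero,
      cons_val_one, cons_val_fin_one] at this
    linear_combination I * this + (k 0 1 + k 1 0) * I_mul_I
  have h11 : k 1 1 = k 0 0 := by
    have := hθ 0 1
    simp only [θm, Matrix.mul_apply, Fin.sum_univ_two, of_apply, cons_val', cons_val_zero,
      cons_val_one, cons_val_fin_one] at this
    linear_combination I * this + (k 1 1 - k 0 0) * I_mul_I
  have hre0 : conj (k 0 0) = k 0 0 := by
    simpa [Matrix.star_apply, Matrix.adjugate_fin_two, h11] using hadj 0 0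
  have hre1 : conj (k 0 1) = k 0 1 := by
    simpa [Matrix.star_apply, Matrix.adjugate_fin_two, h10] using hadj 1 0
  obtain ⟨p, hp⟩ : ∃ p : ℝ, k 0 0 = p := ⟨_, (conj_eq_iff_re.mp hre0).symm⟩
  obtain ⟨q, hq⟩ : ∃ q : ℝ, k 0 1 = q := ⟨_, (conj_eq_iff_re.mp hre1).symm⟩
  have hpq : p ^ 2 + (-q) ^ 2 = 1 := by
    have hdet := hk.2
    rw [Matrix.det_fin_two, h11, h10, hp, hq] at hdet
    exact_mod_cast (by linear_combination hdet : (p : ℂ) ^ 2 + (-q : ℂ) ^ 2 = 1)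
  obtain ⟨s, hcos, hsin⟩ := Real.exists_cos_sin_eq hpq
  refine ⟨s, ?_⟩
  rw [Matrix.eta_fin_two k, Rot, h11, h10, hp, hq, hcos, hsin]
  simp

end SU2

lemma SU2_Rot (t : ℝ) : SU2 (Rot t) := by
  refine ⟨by rw [star_Rot, Rot_mul_Rot, neg_add_cancel, Rot_zero], ?_⟩
  rw [Rot, Matrix.det_fin_two_of]
  push_cast
  linear_combination Complex.cos_sq_add_sin_sq (t : ℂ)

lemma Mf_Rot_mul (s : ℝ) (v : M₂) : Mf (Rot s * v) = Mf v := by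
  have hθ : star (Rot s) * θm * Rot s = θm := by
    rw [Matrix.mul_assoc, (commute_θm_Rot s).eq, ← Matrix.mul_assoc, (SU2_Rot s).1,
      Matrix.one_mul]
  simp only [Mf, StarMul.star_mul, Matrix.mul_assoc] at hθ ⊢
  rw [← Matrix.mul_assoc θm, ← Matrix.mul_assoc (star (Rot s)), hθ]

lemma Xf_Rot_mul (s : ℝ) (v : M₂) : Xf (Rot s * v) = Xf v := by
  rw [Xf, Xf, Mf_Rot_mul]

lemma Mf_mul_Rot (t : ℝ) (v : M₂) : Mf (v * Rot t) = Rot (-t) * Mf v * Rot t := by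
  simp only [Mf, StarMul.star_mul, star_Rot, Matrix.mul_assoc]

lemma star_Mf (u : M₂) : star (Mf u) = Mf u := by
  simp only [Mf, StarMul.star_mul, star_star, star_θm, Matrix.mul_assoc]

lemma conj_Zf (u : M₂) : conj (Zf u) = Zf u := by
  simpa [Zf, Matrix.star_apply] using congrFun (congrFun (star_Mf u) 0) 0

lemma Zf_eq_re (u : M₂) : Zf u = (Zf u).re := (conj_eq_iff_re.mp (conj_Zf u)).symm

def YZf (u : M₂) : ℂ := ⟨(Xf u).im, (Zf u).re⟩

lemma YZf_Rot_mul (s : ℝ) (v : M₂) : YZf (Rot s * v) = YZf v := by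
  simp only [YZf, Xf, Zf, Mf_Rot_mul]

namespace SU2

variable {u v : M₂}

lemma trace_Mf (hu : SU2 u) : (Mf u).trace = 0 := by
  rw [Mf, Matrix.trace_mul_comm, ← Matrix.mul_assoc, hu.mul_star, Matrix.one_mul]
  simp [θm, Matrix.trace_fin_two]

lemma Mf_mul_Mf (hu : SU2 u) : Mf u * Mf u = 1 := by
  simp only [Mf, Matrix.mul_assoc]
  rw [← Matrix.mul_assoc u, hu.mul_star, Matrix.one_mul, ← Matrix.mul_assoc θm, θm_mul_θm,
    Matrix.one_mul, hu.1]

lemma Mf_eq (hu : SU2 u) : Mf u = !![Zf u, I * conj (Xf u); -(I * Xf u), -Zf u] := by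
  have h10 : Mf u 1 0 = -(I * Xf u) := by
    rw [Xf, ← mul_assoc, I_mul_I]; ring
  have h01 : Mf u 0 1 = conj (Mf u 1 0) := by
    simpa [Matrix.star_apply] using (congrFun (congrFun (star_Mf u) 0) 1).symm
  have h11 : Mf u 1 1 = -Mf u 0 0 := by
    linear_combination (by simpa [Matrix.trace_fin_two] using hu.trace_Mf : Mf u 0 0 + Mf u 1 1 = 0)
  rw [Matrix.eta_fin_two (Mf u), h11, h01, h10, Zf]
  simp

lemma normSq_Xf_add_sq_Zf (hu : SU2 u) : normSq (Xf u) + (Zf u).re ^ 2 = 1 := by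
  have h := congrFun (congrFun hu.Mf_mul_Mf 0) 0
  rw [hu.Mf_eq, Matrix.mul_fin_two] at h
  simp only [of_apply, cons_val', cons_val_zero, cons_val_fin_one, one_apply_eq] at h
  have hC : ((normSq (Xf u) + (Zf u).re ^ 2 : ℝ) : ℂ) = 1 := by
    push_cast
    rw [normSq_eq_conj_mul_self, ← Zf_eq_re]
    linear_combination h + conj (Xf u) * Xf u * I_mul_I
  exact_mod_cast hC

lemma sq_re_Xf_add_sq_norm_YZf (hu : SU2 u) : (Xf u).re ^ 2 + ‖YZf u‖ ^ 2 = 1 := by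
  rw [Complex.sq_norm, ← hu.normSq_Xf_add_sq_Zf, normSq_apply, normSq_apply, YZf]
  ring

lemma Mf_eq_of_re_Xf_eq_of_YZf_eq (hu : SU2 u) (hv : SU2 v) (hre : (Xf u).re = (Xf v).re)
    (hYZ : YZf u = YZf v) : Mf u = Mf v := by
  have hX : Xf u = Xf v := Complex.ext hre (congrArg re hYZ)
  have hZ : Zf u = Zf v := by
    rw [Zf_eq_re u, Zf_eq_re v]; exact congrArg ofReal (congrArg im hYZ)
  rw [hu.Mf_eq, hv.Mf_eq, hX, hZ]

lemma exists_Rot_mul_eq_of_Mf_eq (hu : SU2 u) (hv : SU2 v) (h : Mf u = Mf v) :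
    ∃ s, v = Rot s * u := by
  set k := v * star u
  have hθ : star k * θm * k = θm := by
    calc star k * θm * k = u * Mf v * star u := by
          simp only [k, Mf, StarMul.star_mul, star_star, Matrix.mul_assoc]
      _ = θm := by
          rw [← h, Mf]
          simp only [Matrix.mul_assoc]
          rw [hu.mul_star, ← Matrix.mul_assoc, hu.mul_star, Matrix.one_mul, Matrix.mul_one]
  have hk : SU2 k := hv.mul hu.star
  obtain ⟨s, hs⟩ := exists_eq_Rot_of_commute hk <| by
    calc k * θm = k * (star k * θm * k) := by rw [hθ]
      _ = θm * k := by simp only [← Matrix.mul_assoc, hk.mul_star, Matrix.one_mul]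
  exact ⟨s, by rw [← hs, Matrix.mul_assoc, hu.1, Matrix.mul_one]⟩

lemma Xf_mul_Rot (hu : SU2 u) (t : ℝ) :
    Xf (u * Rot t) = ((Real.cos t ^ 2 : ℝ) : ℂ) * Xf u
      + ((Real.sin t ^ 2 : ℝ) : ℂ) * conj (Xf u)
      - ((2 * Real.cos t * Real.sin t : ℝ) : ℂ) * (I * Zf u) := by
  rw [Xf, Mf_mul_Rot, hu.Mf_eq]
  simp only [Rot, Real.cos_neg, Real.sin_neg, ofReal_neg, Matrix.mul_apply, Fin.sum_univ_two,
    of_apply, cons_val', cons_val_zero, cons_val_one, cons_val_fin_one, ofReal_mul, ofReal_pow,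
    ofReal_ofNat]
  linear_combination (-(Real.sin t ^ 2 * conj (Xf u) + Real.cos t ^ 2 * Xf u) : ℂ) * I_mul_I

lemma Zf_mul_Rot (hu : SU2 u) (t : ℝ) :
    Zf (u * Rot t) = ((Real.cos t ^ 2 - Real.sin t ^ 2 : ℝ) : ℂ) * Zf u
      + ((Real.cos t * Real.sin t : ℝ) : ℂ) * (I * (conj (Xf u) - Xf u)) := by
  rw [Zf, Mf_mul_Rot, hu.Mf_eq]
  simp only [Rot, Real.cos_neg, Real.sin_neg, ofReal_neg, Matrix.mul_apply, Fin.sum_univ_two,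
    of_apply, cons_val', cons_val_zero, cons_val_one, cons_val_fin_one, ofReal_mul, ofReal_pow,
    ofReal_sub]
  ring

lemma re_Xf_mul_Rot (hu : SU2 u) (t : ℝ) : (Xf (u * Rot t)).re = (Xf u).re := by
  rw [hu.Xf_mul_Rot, Zf_eq_re u]
  simp only [sub_re, add_re, re_ofReal_mul, conj_re, I_mul_re, ofReal_im]
  linear_combination (Xf u).re * Real.cos_sq_add_sin_sq t

lemma YZf_mul_Rot (hu : SU2 u) (t : ℝ) : YZf (u * Rot t) = cexp (2 * t * I) * YZf u := by
  rw [show (2 : ℂ) * t * I = ((2 * t : ℝ) : ℂ) * I by push_cast; ring, YZf, YZf,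
    hu.Xf_mul_Rot, hu.Zf_mul_Rot, Zf_eq_re u]
  apply Complex.ext
  · simp only [mul_re, sub_im, add_im, im_ofReal_mul, conj_im,
      I_mul_im, ofReal_re, exp_ofReal_mul_I_re, exp_ofReal_mul_I_im, Real.cos_two_mul',
      Real.sin_two_mul]
    ring
  · simp only [mul_im, add_re, re_ofReal_mul, I_mul_re, sub_im, conj_im,
      exp_ofReal_mul_I_re, exp_ofReal_mul_I_im, Real.cos_two_mul', Real.sin_two_mul, ofReal_re]
    ring

lemma exists_isPt_mul_Rot (hu : SU2 u) :
    ∃ lam t, (‖lam‖ = 1 ∧ 0 ≤ lam.im) ∧ IsPt lam (u * Rot t) := by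
  set ρ := YZf u
  set t := -arg ρ / 2
  have hρ : YZf (u * Rot t) = ‖ρ‖ := by
    rw [hu.YZf_mul_Rot, ← exp_neg_arg_mul_I_mul_self]
    congr 2
    simp only [t]
    push_cast
    ring
  refine ⟨⟨(Xf u).re, ‖ρ‖⟩, t, ⟨?_, norm_nonneg ρ⟩, hu.mul (SU2_Rot t), ?_, ?_⟩
  · rw [norm_def, normSq_mk, ← pow_two, ← pow_two, hu.sq_re_Xf_add_sq_norm_YZf, Real.sqrt_one]
  · exact Complex.ext (hu.re_Xf_mul_Rot t) (by simpa [YZf] using congrArg re hρ)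
  · rw [Zf_eq_re]
    simpa [YZf] using congrArg im hρ

end SU2

lemma exists_isPt {lam : ℂ} (h : ‖lam‖ = 1) : ∃ w, IsPt lam w := by
  obtain ⟨μ, hμ⟩ := IsAlgClosed.exists_pow_nat_eq lam two_pos
  have hμ1 : ‖μ‖ = 1 := by
    rw [← pow_left_inj₀ (norm_nonneg μ) zero_le_one two_ne_zero, ← norm_pow, hμ, h, one_pow]
  refine ⟨!![μ, 0; 0, conj μ], ⟨?_, ?_⟩, ?_, ?_⟩
  · ext i j
    fin_cases i <;> fin_cases j <;> simp [Matrix.mul_apply, Matrix.star_apply, conj_mul', hμ1]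
  · simp [Matrix.det_fin_two, mul_conj', hμ1]
  · simp only [Xf, Mf, θm, Matrix.mul_apply, Fin.sum_univ_two, Matrix.star_apply, of_apply,
      cons_val', cons_val_zero, cons_val_one, cons_val_fin_one, RCLike.star_def, map_zero,
      conj_conj]
    linear_combination hμ - μ ^ 2 * I_mul_I
  · simp [Zf, Mf, θm, Matrix.mul_apply, Matrix.star_apply]

namespace IsPt

variable {lam : ℂ} {w : M₂}

lemma YZf_eq (hw : IsPt lam w) : YZf w = lam.im := by
  apply Complex.ext <;> simp [YZf, hw.2.1, hw.2.2]

lemma re_eq_re_Xf (hw : IsPt lam w) {u : M₂} {s t : ℝ} (hu : u = Rot s * w * Rot t) :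
    lam.re = (Xf u).re := by
  rw [hu, Matrix.mul_assoc, Xf_Rot_mul, hw.1.re_Xf_mul_Rot, hw.2.1]

lemma exists_Rot_mul_eq_mul_Rot (hw : IsPt lam w) (hlam : lam.im = 0) (t : ℝ) :
    ∃ s, w * Rot t = Rot s * w := by
  have hwt := hw.1.mul (SU2_Rot t)
  refine hw.1.exists_Rot_mul_eq_of_Mf_eq hwt
    (hw.1.Mf_eq_of_re_Xf_eq_of_YZf_eq hwt (hw.1.re_Xf_mul_Rot t).symm ?_)
  rw [hw.1.YZf_mul_Rot, hw.YZf_eq, hlam, ofReal_zero, mul_zero]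

lemma Rot_eq_one_or_neg_one (hw : IsPt lam w) (hlam : lam.im ≠ 0) {s t : ℝ}
    (h : w * Rot t = Rot s * w) : Rot t = 1 ∨ Rot t = -1 := by
  apply Rot_eq_one_or_neg_one_of_cexp_eq_one
  have hYZ := congrArg YZf h
  rw [hw.1.YZf_mul_Rot, YZf_Rot_mul, hw.YZf_eq] at hYZ
  exact (mul_eq_right₀ (ofReal_ne_zero.mpr hlam)).mp hYZ

end IsPt

/-- every point `p*_λ` (`λ ∈ 𝕌₊`) exists; every `K`-orbit in `K\U` contains exactly
one point of the form `p*_λ` with `λ ∈ 𝕌₊`; and the stabilizer of `p*_λ` in `K = SO(2)` is all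
of `K` when `λ = ±1`, and `{±1}` otherwise. -/
theorem stmt_7 :
    (∀ lam : ℂ, ‖lam‖ = 1 → 0 ≤ lam.im → ∃ w, IsPt lam w) ∧
    (∀ u, SU2 u → ∃! lam : ℂ, (‖lam‖ = 1 ∧ 0 ≤ lam.im) ∧
      ∃ w, IsPt lam w ∧ ∃ s t : ℝ, u = Rot s * w * Rot t) ∧
    (∀ lam : ℂ, ‖lam‖ = 1 → 0 ≤ lam.im → ∀ w, IsPt lam w →
      ((lam = 1 ∨ lam = -1) → ∀ t : ℝ, ∃ s : ℝ, w * Rot t = Rot s * w) ∧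
      (¬(lam = 1 ∨ lam = -1) → ∀ t : ℝ,
        ((∃ s : ℝ, w * Rot t = Rot s * w) ↔ (Rot t = 1 ∨ Rot t = -1)))) := by
  refine ⟨fun lam h _ => exists_isPt h, fun u hu => ?_, fun lam hn _ w hw => ⟨?_, ?_⟩⟩
  · obtain ⟨lam, t, hlam, hw⟩ := hu.exists_isPt_mul_Rot
    have hu_eq : u = Rot 0 * (u * Rot t) * Rot (-t) := by
      rw [Rot_zero, Matrix.one_mul, Matrix.mul_assoc, Rot_mul_Rot, add_neg_cancel, Rot_zero,
        Matrix.mul_one]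
    refine ⟨lam, ⟨hlam, _, hw, 0, -t, hu_eq⟩, ?_⟩
    rintro μ ⟨⟨hμn, hμim⟩, w', hw', s', t', hu'⟩
    exact Complex.eq_of_re_eq_of_norm_eq (hμn.trans hlam.1.symm)
      ((hw'.re_eq_re_Xf hu').trans (hw.re_eq_re_Xf hu_eq).symm) hμim hlam.2
  · intro hpm t
    exact hw.exists_Rot_mul_eq_mul_Rot (by rcases hpm with rfl | rfl <;> simp) t
  · intro hpm t
    refine ⟨fun ⟨s, h⟩ => hw.Rot_eq_one_or_neg_one (im_ne_zero_of_norm_eq_one hn hpm) h, ?_⟩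
    rintro (h | h)
    · exact ⟨0, by rw [h, Rot_zero, Matrix.mul_one, Matrix.one_mul]⟩
    · exact ⟨Real.pi, by
        rw [h, Rot_pi, Matrix.mul_neg, Matrix.neg_mul, Matrix.mul_one, Matrix.one_mul]⟩

end
end

section
/- For q > 0 and n a nonnegative integer with ε = (−1)^{n+1}, define on span(ζ_m : m ∈ ℤ^ε, m > n) the inner product (ζ_m | ζ_{m'}) = δ_{m,m'} · (2/(qᵐ + q⁻ᵐ)) · ∏_{l odd, 1 ≤ l ≤ m−n} [l−1]_q/[l−1+2n]_q. Then this is a well-defined positive-definite Hermitian inner product; in particular each product ∏_{l odd, 1 ≤ l ≤ m−n} [l−1]_q/[l−1+2n]_q is a positive real number (with the empty-product and [0]_q-boundary conventions making the first factor equal to the appropriate positive value). -/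
/-- The `q`-integer `[k]_q`, with the convention `[k]_1 = k`. -/
noncomputable def qintN (q : ℝ) (k : ℕ) : ℝ :=
  if q = 1 then (k : ℝ) else (q ^ (k : ℤ) - q ^ (-(k : ℤ))) / (q - q⁻¹)

/-- The diagonal weight `(ζ_m | ζ_m)_{n,q} = (2/(qᵐ + q⁻ᵐ)) · ∏_{l odd, 1 ≤ l ≤ m−n}
`[l−1]_q/[l−1+2n]_q`, with the boundary factor `l = 1` interpreted as `1` (the paper's product
convention); here the product runs over `l = 2j+3`, `0 ≤ j < (m−n−1)/2`. -/
noncomputable def dweight (q : ℝ) (n : ℕ) (m : ℤ) : ℝ :=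
  (2 / (q ^ m + q ^ (-m))) *
    ∏ j ∈ Finset.range ((m - (n : ℤ) - 1) / 2).toNat,
      qintN q (2 * (j + 1)) / qintN q (2 * (j + 1) + 2 * n)

lemma qintN_pos {q : ℝ} (hq : 0 < q) {k : ℕ} (hk : 0 < k) : 0 < qintN q k := by
  unfold qintN
  split_ifs with h1
  · exact_mod_cast hk
  · have hk' : (0 : ℤ) < (k : ℤ) := by exact_mod_cast hk
    rcases lt_or_gt_of_ne h1 with h | h
    · -- q < 1 : both numerator and denominator negative
      have hnum : q ^ (k : ℤ) < q ^ (-(k : ℤ)) := by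
        apply zpow_lt_zpow_right_of_lt_one₀ hq h
        omega
      have hden : q < q⁻¹ := lt_trans h ((one_lt_inv₀ hq).2 h)
      exact div_pos_of_neg_of_neg (by linarith) (by linarith)
    · have hnum : q ^ (-(k : ℤ)) < q ^ (k : ℤ) := by
        apply zpow_lt_zpow_right₀ h
        omega
      have hden : q⁻¹ < q := lt_trans ((inv_lt_one₀ hq).2 h) h
      exact div_pos (by linarith) (by linarith)

/-- for `q > 0`, `n ≥ 0`, `ε = (−1)^{n+1}` (so the index set is
`{m ∈ ℤ : m > n, Odd (m − n)}`), the inner product with diagonal weights `dweight q n m` is a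
well-defined positive-definite Hermitian inner product: each weight (each product of ratios of
`q`-integers times `2/(qᵐ+q⁻ᵐ)`) is a positive real number, and the associated quadratic form
is nonnegative and definite. -/
theorem stmt_14 (q : ℝ) (hq : 0 < q) (n : ℕ) :
    (∀ m : ℤ, (n : ℤ) < m → Odd (m - (n : ℤ)) → 0 < dweight q n m) ∧
    (∀ c : ℤ →₀ ℂ, (∀ m ∈ c.support, (n : ℤ) < m ∧ Odd (m - (n : ℤ))) →
      0 ≤ ∑ m ∈ c.support, dweight q n m * ‖c m‖ ^ 2 ∧
      ((∑ m ∈ c.support, dweight q n m * ‖c m‖ ^ 2) = 0 → c = 0)) := by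
  have hw : ∀ m : ℤ, 0 < dweight q n m := by
    intro m
    unfold dweight
    apply mul_pos
    · apply div_pos two_pos
      positivity
    · apply Finset.prod_pos
      intro j _
      exact div_pos (qintN_pos hq (by omega)) (qintN_pos hq (by omega))
  refine ⟨fun m _ _ => hw m, fun c _ => ?_⟩
  have hterm : ∀ m ∈ c.support, 0 ≤ dweight q n m * ‖c m‖ ^ 2 := by
    intro m _
    exact mul_nonneg (hw m).le (sq_nonneg _)
  refine ⟨Finset.sum_nonneg hterm, fun hsum => ?_⟩
  have := (Finset.sum_eq_zero_iff_of_nonneg hterm).mp hsum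
  ext m
  by_contra hm
  have hms : m ∈ c.support := Finsupp.mem_support_iff.mpr (by simpa using hm)
  have h0 := this m hms
  have h2 : ‖c m‖ ^ 2 = 0 := by
    rcases mul_eq_zero.mp h0 with h | h
    · exact absurd h (hw m).ne'
    · simpa using h
  simp at h2
  exact hm (by simpa using h2)
end
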